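/- With A_n the weight matrix and Â_n the matrix obtained from A_n by zeroing all entries (γ, σ) for which the first block of γ strictly contains an element of S(σ) other than its last element (equivalently, in the word encoding, the initial run of *'s in the row word is longer than in the column word), one has for all real α and n ≥ 1: det(αA_{n+1} + (1−α)Â_{n+1}) = det(A_n)·det(−2A_n)·det(αA_n + Â_n), with det(αA₁ + (1−α)Â₁) = −2. -/

import Mathlib

/-!
Split the words of length `n + 2` by their first letter `0`, `1` or `*`, and write `A`, `Â` for
`A_{n+1}`, `Â_{n+1}` and `P`, `Q` for the diagonal projections onto the columns whose first sign
is `0`, resp. `1`. The entry recursion of the weights turns `αA_{n+2} + (1 - α)Â_{n+2}` into the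
block matrix
`[[A, A, A], [A, -A, A(P - Q)], [-αAP, -αAQ, Â]]`.
Subtracting the first block column from the second, and the first two block columns times `P`
and `Q` from the third, leaves a block lower triangular matrix with diagonal blocks
`[[A, 0], [A, -2A]]` and `αA + Â`. For words of length one there is no `*`, so `Â₁ = A₁`, which
is `[[1, 1], [1, -1]]`.
-/

open Finset

def firstSign (l : List (Option Bool)) : Bool :=
  (l.filterMap id).headI

/-- Whether the `some` entries of a list form a prefix (no `some` after a `none`). -/
def somesArePrefix (l : List (Option Bool)) : Bool :=
  (l.dropWhile fun o => o.isSome).all fun o => o.isNone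

/-- The weight `wt_γ(σ)` of a signed set `σ` (encoded as a word `l` over
`{0,1,*} = Option Bool`) with respect to a signed composition `γ`:
`wt_γ(σ) = 0` unless `S(σ)` is unimodal with respect to the underlying composition of
`γ` and the sign vector `ε̃` of `σ` is constant on each block of `γ`; otherwise
`wt_γ(σ) = (−1)^{|S(σ) \ S(γ)| + n_γ(σ)}`, where `n_γ(σ)` is the number of blocks on
which both `γ` and `σ` assign the negative sign. -/
def wt : List (ℕ × Bool) → List (Option Bool) → ℤ
  | [], l => if l.isEmpty then 1 else 0
  | (a, b) :: t, l =>
      let blk := l.take a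
      let inner := blk.take (a - 1)
      let sgn := firstSign l
      if somesArePrefix inner
          && ((List.range blk.length).all fun j => firstSign (l.drop j) == sgn) then
        (-1 : ℤ) ^ ((inner.filterMap id).length + (if b && sgn then 1 else 0))
          * wt t (l.drop a)
      else 0

/-- Decoding of a word over `{0,1,*}` (with last letter not `*`) into the signed
composition it encodes. -/
def compOfWord : List (Option Bool) → List (ℕ × Bool)
  | [] => []
  | none :: t =>
      match compOfWord t with
      | [] => []
      | (a, b) :: r => (a + 1, b) :: r
  | some b :: t => (1, b) :: compOfWord t

/-- The set `Σ^B(n+1)` of signed sets, encoded as words of length `n+1` over `{0,1,*}`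
whose last letter is not `*`. -/
def SignedSetWord (n : ℕ) : Type :=
  { w : Fin (n + 1) → Option Bool // w (Fin.last n) ≠ none }

noncomputable instance (n : ℕ) : Fintype (SignedSetWord n) := by
  unfold SignedSetWord; infer_instance

instance (n : ℕ) : DecidableEq (SignedSetWord n) := by
  unfold SignedSetWord; infer_instance

/-- The weight matrix `A_{n+1}`, with rows indexed by signed compositions of `n+1`
(encoded as words) and columns by signed sets in `Σ^B(n+1)`, whose `(γ, σ)` entry is
`wt_γ(σ)`. -/
def weightMatrix (n : ℕ) : Matrix (SignedSetWord n) (SignedSetWord n) ℤ :=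
  Matrix.of fun γ σ => wt (compOfWord (List.ofFn γ.1)) (List.ofFn σ.1)

/-- The length of the initial run of `*`-s in a word. -/
def starRun {n : ℕ} (w : SignedSetWord n) : ℕ :=
  ((List.ofFn w.1).takeWhile fun o => o.isNone).length

/-- The matrix `Â_{n+1}`, obtained from `A_{n+1}` by setting to zero all entries
`(γ, σ)` for which the initial `*`-run of the row word is longer than that of the
column word. -/
def weightMatrixHat (n : ℕ) : Matrix (SignedSetWord n) (SignedSetWord n) ℤ :=
  Matrix.of fun γ σ => if starRun σ < starRun γ then 0 else weightMatrix n γ σ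

/-- `A_{n+1}` as a real matrix. -/
noncomputable def weightMatrixR (n : ℕ) : Matrix (SignedSetWord n) (SignedSetWord n) ℝ :=
  Matrix.of fun γ σ => ((weightMatrix n γ σ : ℤ) : ℝ)

/-- `Â_{n+1}` as a real matrix. -/
noncomputable def weightMatrixHatR (n : ℕ) :
    Matrix (SignedSetWord n) (SignedSetWord n) ℝ :=
  Matrix.of fun γ σ => ((weightMatrixHat n γ σ : ℤ) : ℝ)

/-- The list of (absolute) part sizes of the signed composition encoded by the word `γ`. -/
def partSizes {n : ℕ} (γ : SignedSetWord n) : List ℕ :=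
  (compOfWord (List.ofFn γ.1)).map Prod.fst

section BlockDet

open Matrix

variable {ι R : Type*} [Fintype ι] [DecidableEq ι] [CommRing R]

theorem det_fromBlocks_of_complementary_idempotents (A Â P Q : Matrix ι ι R) (c : R)
    (hPQ : P + Q = 1) (hP : P * P = P) (hQ : Q * Q = Q) :
    (fromBlocks (fromBlocks A A A (-A)) (fromRows A (A * (P - Q)))
        (fromCols (-c • (A * P)) (-c • (A * Q))) Â).det
      = A.det * ((-2 : R) • A).det * (c • A + Â).det := by
  let U₁ : Matrix (ι ⊕ ι) (ι ⊕ ι) R := fromBlocks 1 (-1) 0 1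
  let U : Matrix ((ι ⊕ ι) ⊕ ι) ((ι ⊕ ι) ⊕ ι) R := fromBlocks U₁ (-fromRows P Q) 0 1
  have hU : U.det = 1 := by simp [U, U₁]
  have hAPQ : A * P + A * Q = A := by rw [← Matrix.mul_add, hPQ, Matrix.mul_one]
  have h₁₁ : fromBlocks A A A (-A) * U₁ = fromBlocks A 0 A ((-2 : R) • A) := by
    simp only [U₁, fromBlocks_multiply, fromBlocks_inj]
    refine ⟨?_, ?_, ?_, ?_⟩ <;> simp only [Matrix.mul_one, Matrix.mul_zero, Matrix.mul_neg] <;>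
      module
  have h₁₂ : fromBlocks A A A (-A) * fromRows P Q = fromRows A (A * (P - Q)) := by
    rw [fromBlocks_mul_fromRows, hAPQ, Matrix.neg_mul, Matrix.mul_sub, sub_eq_add_neg]
  have h₂₂ : fromCols (-c • (A * P)) (-c • (A * Q)) * fromRows P Q = -c • A := by
    rw [fromCols_mul_fromRows, Matrix.smul_mul, Matrix.smul_mul, Matrix.mul_assoc,
      Matrix.mul_assoc, hP, hQ, ← smul_add, hAPQ]
  rw [← mul_one (det _), ← hU, ← det_mul, fromBlocks_multiply]
  simp only [Matrix.mul_neg, Matrix.mul_zero, add_zero, Matrix.mul_one, h₁₁, h₁₂, h₂₂,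
    neg_add_cancel]
  rw [det_fromBlocks_zero₁₂, det_fromBlocks_zero₁₂, neg_smul c, neg_neg]

end BlockDet

lemma List.all_take_iff_le_length_takeWhile {α : Type*} (p : α → Bool) :
    ∀ (L : List α) (k : ℕ), ¬ L.all p →
      ((L.take k).all p ↔ k ≤ (L.takeWhile p).length)
  | _, 0, _ => by simp
  | [], _ + 1, h => by simp at h
  | x :: t, k + 1, h => by
    by_cases hx : p x
    · have ht : ¬ t.all p := fun h' => h (by simp [hx, h'])
      rw [List.take_succ_cons, List.all_cons, hx, Bool.true_and, List.takeWhile_cons_of_pos hx,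
        List.length_cons, List.all_take_iff_le_length_takeWhile p t k ht]
      omega
    · simp [List.takeWhile_cons_of_neg hx, hx]

lemma firstSign_none_cons (l : List (Option Bool)) : firstSign (none :: l) = firstSign l := by
  simp [firstSign]

lemma firstSign_some_cons (b : Bool) (l : List (Option Bool)) :
    firstSign (some b :: l) = b := by
  simp [firstSign]

lemma somesArePrefix_some_cons (b : Bool) (l : List (Option Bool)) :
    somesArePrefix (some b :: l) = somesArePrefix l := by
  simp [somesArePrefix, List.dropWhile]

lemma somesArePrefix_none_cons (l : List (Option Bool)) :
    somesArePrefix (none :: l) = l.all (fun o => o.isNone) := by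
  simp [somesArePrefix, List.dropWhile]

lemma somesArePrefix_of_all_isNone {l : List (Option Bool)}
    (h : l.all (fun o => o.isNone)) : somesArePrefix l = true := by
  cases l with
  | nil => rfl
  | cons x t =>
    cases x
    · simpa [somesArePrefix_none_cons] using h
    · simp at h

lemma wt_cons (a : ℕ) (b : Bool) (r : List (ℕ × Bool)) (l : List (Option Bool)) :
    wt ((a, b) :: r) l =
      if somesArePrefix (l.take (a - 1))
          && ((List.range (min a l.length)).all fun j => firstSign (l.drop j) == firstSign l) then
        (-1 : ℤ) ^ (((l.take (a - 1)).filterMap id).length + (if b && firstSign l then 1 else 0))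
          * wt r (l.drop a)
      else 0 := by
  simp [wt, List.take_take]

/-- A letter `some a'` strictly inside a block is an element of `S(σ) \ S(γ)`, so it contributes
a sign, and it fixes the sign of the whole block to be `a'`. -/
lemma wt_add_two_cons_some (c : ℕ) (b : Bool) (r : List (ℕ × Bool)) (a' : Bool)
    (l : List (Option Bool)) (hl : l ≠ []) :
    wt ((c + 2, b) :: r) (some a' :: l)
      = if firstSign l = a' then -wt ((c + 1, b) :: r) l else 0 := by
  rw [wt_cons, wt_cons]
  simp only [Nat.add_one_sub_one, List.take_succ_cons, List.length_cons, Nat.succ_min_succ,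
    List.range_succ_eq_map, List.all_cons, List.all_map, Function.comp_def, List.drop_zero,
    List.drop_succ_cons, somesArePrefix_some_cons, firstSign_some_cons, List.filterMap_cons, id,
    beq_self_eq_true, Bool.true_and]
  by_cases h : firstSign l = a'
  · subst h
    split_ifs <;> simp_all [pow_succ]
  · have hlen : 0 < min (c + 1) l.length := by grind [List.length_pos_iff]
    have hall : ((List.range (min (c + 1) l.length)).all
        fun j => firstSign (l.drop j) == a') = false :=
      List.all_eq_false.mpr ⟨0, List.mem_range.mpr hlen, by simpa using h⟩
    simp [h, hall]

lemma wt_add_two_cons_none (c : ℕ) (b : Bool) (r : List (ℕ × Bool)) (l : List (Option Bool)) :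
    wt ((c + 2, b) :: r) (none :: l)
      = if (l.take c).all (fun o => o.isNone) then wt ((c + 1, b) :: r) l else 0 := by
  rw [wt_cons, wt_cons]
  simp only [Nat.add_one_sub_one, List.take_succ_cons, List.length_cons, Nat.succ_min_succ,
    List.range_succ_eq_map, List.all_cons, List.all_map, Function.comp_def, List.drop_zero,
    List.drop_succ_cons, somesArePrefix_none_cons, firstSign_none_cons, beq_self_eq_true,
    Bool.true_and]
  by_cases h : (l.take c).all (fun o => o.isNone) <;> simp [h, somesArePrefix_of_all_isNone]

lemma compOfWord_eq_cons : ∀ (l : List (Option Bool)) (h : l ≠ []), l.getLast h ≠ none →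
    ∃ b r, compOfWord l = ((l.takeWhile fun o => o.isNone).length + 1, b) :: r
  | [], h, _ => absurd rfl h
  | some b :: t, _, _ => ⟨b, compOfWord t, by simp [compOfWord]⟩
  | none :: t, _, hlast => by
    have ht : t ≠ [] := by
      rintro rfl
      exact hlast rfl
    obtain ⟨b, r, hr⟩ := compOfWord_eq_cons t ht (by rwa [List.getLast_cons ht] at hlast)
    exact ⟨b, r, by simp [compOfWord, hr]⟩

namespace SignedSetWord

variable {n : ℕ}

def prepend (x : Option Bool) (w : SignedSetWord n) : SignedSetWord (n + 1) :=
  ⟨Fin.cons x w.1, by simpa [← Fin.succ_last] using w.2⟩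

def tail (w : SignedSetWord (n + 1)) : SignedSetWord n :=
  ⟨Fin.tail w.1, by simpa [Fin.tail, Fin.succ_last] using w.2⟩

@[simp] lemma tail_prepend (x : Option Bool) (w : SignedSetWord n) : (prepend x w).tail = w := rfl

lemma prepend_head_tail (w : SignedSetWord (n + 1)) : prepend (w.1 0) w.tail = w :=
  Subtype.ext (Fin.cons_self_tail w.1)

lemma ofFn_prepend (x : Option Bool) (w : SignedSetWord n) :
    List.ofFn (prepend x w).1 = x :: List.ofFn w.1 :=
  List.ofFn_succ

def prependEquiv :
    SignedSetWord (n + 1) ≃ (SignedSetWord n ⊕ SignedSetWord n) ⊕ SignedSetWord n where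
  toFun w :=
    match w.1 0 with
    | some false => .inl (.inl w.tail)
    | some true => .inl (.inr w.tail)
    | none => .inr w.tail
  invFun := Sum.elim (Sum.elim (prepend (some false)) (prepend (some true))) (prepend none)
  left_inv w := by
    obtain ⟨x, w, rfl⟩ : ∃ x w', w = prepend x w' := ⟨_, _, (prepend_head_tail w).symm⟩
    rcases x with _ | _ | _ <;> rfl
  right_inv s := by
    rcases s with (s | s) | s <;> rfl

def headSign (w : SignedSetWord n) : Bool := firstSign (List.ofFn w.1)

@[simp] lemma headSign_prepend_some (a : Bool) (w : SignedSetWord n) :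
    (prepend (some a) w).headSign = a := by
  rw [headSign, ofFn_prepend, firstSign_some_cons]

@[simp] lemma headSign_prepend_none (w : SignedSetWord n) :
    (prepend none w).headSign = w.headSign := by
  rw [headSign, ofFn_prepend, firstSign_none_cons, headSign]

@[simp] lemma starRun_prepend_some (a : Bool) (w : SignedSetWord n) :
    starRun (prepend (some a) w) = 0 := by
  simp only [starRun, ofFn_prepend]
  simp

@[simp] lemma starRun_prepend_none (w : SignedSetWord n) :
    starRun (prepend none w) = starRun w + 1 := by
  simp only [starRun, ofFn_prepend]
  simp

lemma ofFn_ne_nil (w : SignedSetWord n) : List.ofFn w.1 ≠ [] := by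
  simp

lemma getLast_ofFn_ne_none (w : SignedSetWord n) :
    (List.ofFn w.1).getLast (ofFn_ne_nil w) ≠ none := by
  rw [List.getLast_ofFn]
  exact w.2

lemma compOfWord_ofFn (w : SignedSetWord n) :
    ∃ b r, compOfWord (List.ofFn w.1) = (starRun w + 1, b) :: r :=
  compOfWord_eq_cons _ (ofFn_ne_nil w) (getLast_ofFn_ne_none w)

lemma all_take_isNone_iff (w : SignedSetWord n) (k : ℕ) :
    ((List.ofFn w.1).take k).all (fun o => o.isNone) ↔ k ≤ starRun w := by
  refine List.all_take_iff_le_length_takeWhile _ _ k fun h => getLast_ofFn_ne_none w ?_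
  exact Option.isNone_iff_eq_none.mp (List.all_eq_true.mp h _ (List.getLast_mem _))

lemma exists_apply_zero_eq_some (w : SignedSetWord 0) : ∃ b, w.1 0 = some b :=
  Option.ne_none_iff_exists'.mp w.2

def equivBool : Bool ≃ SignedSetWord 0 where
  toFun b := ⟨fun _ => some b, Option.some_ne_none b⟩
  invFun w := (w.1 0).getD false
  left_inv _ := rfl
  right_inv w := by
    obtain ⟨b, hb⟩ := w.exists_apply_zero_eq_some
    exact Subtype.ext (funext fun i => by simp [Fin.fin_one_eq_zero i, hb])

end SignedSetWord

open SignedSetWord Matrix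

section Recursion

variable {n : ℕ}

lemma weightMatrix_prepend_some_left (a : Bool) (g : SignedSetWord n) (σ : SignedSetWord (n + 1)) :
    weightMatrix (n + 1) (prepend (some a) g) σ
      = (if a && σ.headSign then -1 else 1) * weightMatrix n g σ.tail := by
  obtain ⟨x, w, rfl⟩ : ∃ x w, σ = prepend x w := ⟨_, _, (prepend_head_tail σ).symm⟩
  simp only [weightMatrix, Matrix.of_apply, ofFn_prepend, tail_prepend, headSign]
  rw [show compOfWord (some a :: List.ofFn g.1) = (1, a) :: compOfWord (List.ofFn g.1) from rfl]
  split_ifs <;> simp_all [wt, somesArePrefix]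

lemma weightMatrix_prepend_none_some (a : Bool) (g w : SignedSetWord n) :
    weightMatrix (n + 1) (prepend none g) (prepend (some a) w)
      = if w.headSign = a then -weightMatrix n g w else 0 := by
  obtain ⟨b, r, hr⟩ := compOfWord_ofFn g
  simp only [weightMatrix, Matrix.of_apply, ofFn_prepend, compOfWord, hr]
  rw [wt_add_two_cons_some _ _ _ _ _ (ofFn_ne_nil w), headSign]

lemma weightMatrix_prepend_none_none (g w : SignedSetWord n) :
    weightMatrix (n + 1) (prepend none g) (prepend none w) = weightMatrixHat n g w := by
  obtain ⟨b, r, hr⟩ := compOfWord_ofFn g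
  simp only [weightMatrix, weightMatrixHat, Matrix.of_apply, ofFn_prepend, compOfWord, hr]
  rw [wt_add_two_cons_none, ← hr]
  by_cases hk : starRun g ≤ starRun w
  · rw [if_pos ((all_take_isNone_iff w _).mpr hk), if_neg (by omega)]
  · rw [if_neg (mt (all_take_isNone_iff w _).mp hk), if_pos (by omega)]

lemma weightMatrixHat_prepend_some_left (a : Bool) (g : SignedSetWord n)
    (σ : SignedSetWord (n + 1)) :
    weightMatrixHat (n + 1) (prepend (some a) g) σ
      = weightMatrix (n + 1) (prepend (some a) g) σ := by
  simp [weightMatrixHat]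

lemma weightMatrixHat_prepend_none_some (a : Bool) (g w : SignedSetWord n) :
    weightMatrixHat (n + 1) (prepend none g) (prepend (some a) w) = 0 := by
  simp [weightMatrixHat]

lemma weightMatrixHat_prepend_none_none (g w : SignedSetWord n) :
    weightMatrixHat (n + 1) (prepend none g) (prepend none w) = weightMatrixHat n g w := by
  rw [weightMatrixHat, Matrix.of_apply, weightMatrix_prepend_none_none]
  simp only [weightMatrixHat, Matrix.of_apply, starRun_prepend_none, Nat.add_lt_add_iff_right]
  split_ifs <;> rfl

end Recursion

noncomputable def headSignProj (n : ℕ) (b : Bool) : Matrix (SignedSetWord n) (SignedSetWord n) ℝ :=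
  diagonal fun w => if w.headSign = b then 1 else 0

lemma headSignProj_add (n : ℕ) : headSignProj n false + headSignProj n true = 1 := by
  rw [headSignProj, headSignProj, diagonal_add, ← diagonal_one]
  congr 1
  funext w
  cases w.headSign <;> simp

lemma headSignProj_mul_self (n : ℕ) (b : Bool) :
    headSignProj n b * headSignProj n b = headSignProj n b := by
  rw [headSignProj, diagonal_mul_diagonal]
  congr 1
  funext w
  split_ifs <;> simp

lemma submatrix_prependEquiv (α : ℝ) (n : ℕ) :
    (α • weightMatrixR (n + 1) + (1 - α) • weightMatrixHatR (n + 1)).submatrix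
        prependEquiv.symm prependEquiv.symm
      = fromBlocks
          (fromBlocks (weightMatrixR n) (weightMatrixR n) (weightMatrixR n) (-weightMatrixR n))
          (fromRows (weightMatrixR n)
            (weightMatrixR n * (headSignProj n false - headSignProj n true)))
          (fromCols (-α • (weightMatrixR n * headSignProj n false))
            (-α • (weightMatrixR n * headSignProj n true)))
          (weightMatrixHatR n) := by
  ext ((g | g) | g) ((w | w) | w)
  all_goals
    simp only [submatrix_apply, prependEquiv, Equiv.coe_fn_symm_mk, Sum.elim_inl, Sum.elim_inr,
      Matrix.add_apply, Matrix.smul_apply, smul_eq_mul, fromBlocks_apply₁₁, fromBlocks_apply₁₂,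
      fromBlocks_apply₂₁, fromBlocks_apply₂₂, fromRows_apply_inl, fromRows_apply_inr,
      fromCols_apply_inl, fromCols_apply_inr, Matrix.neg_apply, Matrix.mul_sub, Matrix.sub_apply,
      mul_diagonal, headSignProj, weightMatrixR, weightMatrixHatR, of_apply,
      weightMatrix_prepend_some_left,
      weightMatrixHat_prepend_some_left, weightMatrix_prepend_none_some,
      weightMatrixHat_prepend_none_some, weightMatrix_prepend_none_none,
      weightMatrixHat_prepend_none_none, headSign_prepend_some, headSign_prepend_none, tail_prepend]
  all_goals first | ring1 | (cases w.headSign <;> simp <;> ring)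

theorem det_weightMatrix_succ (α : ℝ) (n : ℕ) :
    (α • weightMatrixR (n + 1) + (1 - α) • weightMatrixHatR (n + 1)).det
      = (weightMatrixR n).det * ((-2 : ℝ) • weightMatrixR n).det
          * (α • weightMatrixR n + weightMatrixHatR n).det := by
  rw [← det_submatrix_equiv_self prependEquiv.symm, submatrix_prependEquiv]
  exact det_fromBlocks_of_complementary_idempotents _ _ _ _ α (headSignProj_add n)
    (headSignProj_mul_self n false) (headSignProj_mul_self n true)

lemma weightMatrixHatR_zero : weightMatrixHatR 0 = weightMatrixR 0 := by
  ext γ σ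
  obtain ⟨b, hb⟩ := γ.exists_apply_zero_eq_some
  have hγ : starRun γ = 0 := by simp [starRun, List.ofFn_succ, hb]
  simp [weightMatrixHatR, weightMatrixR, weightMatrixHat, hγ]

lemma weightMatrix_zero_equivBool (a b : Bool) :
    weightMatrix 0 (equivBool a) (equivBool b) = if a && b then -1 else 1 := by
  cases a <;> cases b <;> rfl

lemma det_weightMatrixR_zero : (weightMatrixR 0).det = -2 := by
  rw [← det_submatrix_equiv_self (finTwoEquiv.trans equivBool), det_fin_two]
  have h₀ : finTwoEquiv 0 = false := rfl
  have h₁ : finTwoEquiv 1 = true := rfl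
  norm_num [weightMatrixR, weightMatrix_zero_equivBool, h₀, h₁]

/-- The determinant recursion for the weight matrices (here `A_{n+1} = weightMatrix n`):
for every real `α` and every `n ≥ 1`,
`det(αA_{n+1} + (1−α)Â_{n+1}) = det(A_n) · det(−2A_n) · det(αA_n + Â_n)`,
with `det(αA₁ + (1−α)Â₁) = −2`. -/
theorem weightMatrix_det_recursion (α : ℝ) :
    (∀ n : ℕ,
      (α • weightMatrixR (n + 1) + (1 - α) • weightMatrixHatR (n + 1)).det
        = (weightMatrixR n).det * ((-2 : ℝ) • weightMatrixR n).det
            * (α • weightMatrixR n + weightMatrixHatR n).det) ∧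
    (α • weightMatrixR 0 + (1 - α) • weightMatrixHatR 0).det = -2 := by
  refine ⟨det_weightMatrix_succ α, ?_⟩
  rw [weightMatrixHatR_zero, ← add_smul, add_sub_cancel, one_smul, det_weightMatrixR_zero]
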